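/- arXiv:2103.06212 — 4 statements merged into one kernel-verified Lean document; each statement's English description precedes it below -/
import Mathlib

section
/- Let L ≥ 1 and 1 ≤ k ≤ L be integers. Let Y_1, …, Y_k be reals with Y_j ∈ [0,1] for all j and Σ_{j=1}^k Y_j ≤ 1, and let v_1 ≥ v_2 ≥ ⋯ ≥ v_k ≥ 0 be reals. Then Σ_{j=1}^k v_j Y_j ∏_{i=1}^{j-1} (1 − Y_i) ≥ (1 − (1 − 1/L)^L) · Σ_{j=1}^k v_j Y_j. -/
/-!
Telescoping turns the first-success sum over a prefix into `1 - ∏ (1 - Y i)`. By AM-GM this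
product is at most `(1 - s/L)^L`, `s` the prefix mass, and convexity of `t ↦ t^L` between `t = 1`
and `t = 1 - 1/L` bounds that by `1 - s + s (1 - 1/L)^L`. So every prefix of the first-success
weights carries at least a `1 - (1 - 1/L)^L` fraction of the prefix mass, and Abel summation
transfers this prefix domination to any nonincreasing nonnegative values `v`.
-/

open Finset

theorem sum_range_mul_prod_one_sub {R : Type*} [CommRing R] (Y : ℕ → R) (m : ℕ) :
    ∑ j ∈ range m, Y j * ∏ i ∈ range j, (1 - Y i) = 1 - ∏ j ∈ range m, (1 - Y j) := by
  induction m with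
  | zero => simp
  | succ n ih => rw [sum_range_succ, prod_range_succ, ih]; ring

theorem prod_pow_le_weighted_mean_pow {ι : Type*} (s : Finset ι) (w : ι → ℕ) (z : ι → ℝ)
    (hz : ∀ i ∈ s, 0 ≤ z i) :
    ∏ i ∈ s, z i ^ w i ≤ ((∑ i ∈ s, w i * z i) / ∑ i ∈ s, w i) ^ ∑ i ∈ s, w i := by
  set N := ∑ i ∈ s, w i
  rcases Nat.eq_zero_or_pos N with hN | hN
  · have hw : ∀ i ∈ s, w i = 0 := sum_eq_zero_iff.1 hN
    rw [hN, pow_zero, prod_eq_one fun i hi => by rw [hw i hi, pow_zero]]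
  have hP : 0 ≤ ∏ i ∈ s, z i ^ w i := prod_nonneg fun i hi => pow_nonneg (hz i hi) _
  have hmean := Real.geom_mean_le_arith_mean s (fun i => (w i : ℝ)) z (fun i _ => by positivity)
    (by exact_mod_cast hN) hz
  simp only [Real.rpow_natCast, ← Nat.cast_sum] at hmean
  calc ∏ i ∈ s, z i ^ w i = ((∏ i ∈ s, z i ^ w i) ^ (N⁻¹ : ℝ)) ^ N :=
        (Real.rpow_inv_natCast_pow hP hN.ne').symm
    _ ≤ _ := pow_le_pow_left₀ (by positivity) hmean N

theorem one_sub_div_pow_le_one_sub_div_pow {x : ℝ} {n L : ℕ} (hn : 0 < n) (hnL : n ≤ L)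
    (hx : x ≤ n) : (1 - x / n) ^ n ≤ (1 - x / L) ^ L := by
  have hL : (0 : ℝ) < L := by exact_mod_cast hn.trans_le hnL
  have h := prod_pow_le_weighted_mean_pow univ ![n, L - n] ![1 - x / n, 1]
    (by simp [Fin.forall_fin_two, sub_nonneg, div_le_one₀ (by positivity : (0 : ℝ) < n), hx])
  simp only [Fin.prod_univ_two, Fin.sum_univ_two, Matrix.cons_val_zero, Matrix.cons_val_one,
    one_pow, mul_one, Nat.add_sub_cancel' hnL] at h
  convert h using 2
  rw [Nat.cast_sub hnL]
  field_simp
  ring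

theorem one_sub_div_pow_le_one_sub_add_mul_pow (L : ℕ) {x : ℝ} (hx0 : 0 ≤ x) (hx1 : x ≤ 1) :
    (1 - x / L) ^ L ≤ 1 - x + x * (1 - 1 / L) ^ L := by
  have hL : (0 : ℝ) ≤ 1 - 1 / L := sub_nonneg.2 (one_div (L : ℝ) ▸ Nat.cast_inv_le_one L)
  have h := (convexOn_pow L).2 (Set.mem_Ici.2 zero_le_one) (Set.mem_Ici.2 hL)
    (sub_nonneg.2 hx1) hx0 (sub_add_cancel 1 x)
  have hpoint : 1 - x + x * (1 - 1 / L) = 1 - x / L := by ring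
  simpa only [smul_eq_mul, one_pow, mul_one, hpoint] using h

theorem prod_one_sub_le_one_sub_div_pow {ι : Type*} (s : Finset ι) (Y : ι → ℝ) {L : ℕ}
    (hY : ∀ i ∈ s, Y i ≤ 1) (hs : #s ≤ L) :
    ∏ i ∈ s, (1 - Y i) ≤ (1 - (∑ i ∈ s, Y i) / L) ^ L := by
  rcases s.eq_empty_or_nonempty with rfl | hne
  · simp
  have hmean := prod_pow_le_weighted_mean_pow s 1 (fun i => 1 - Y i)
    fun i hi => sub_nonneg.2 (hY i hi)
  simp only [Pi.one_apply, pow_one, Nat.cast_one, one_mul, sum_sub_distrib,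
    sum_const, smul_eq_mul, nsmul_eq_mul, mul_one] at hmean
  calc ∏ i ∈ s, (1 - Y i) ≤ (1 - (∑ i ∈ s, Y i) / #s) ^ #s := by
        convert hmean using 2
        field_simp
    _ ≤ _ := one_sub_div_pow_le_one_sub_div_pow hne.card_pos hs
        (by simpa using sum_le_card_nsmul s Y 1 hY)

theorem mul_sum_le_one_sub_prod_one_sub {ι : Type*} (s : Finset ι) (Y : ι → ℝ) {L : ℕ}
    (hY : ∀ i ∈ s, Y i ≤ 1) (hsum₀ : 0 ≤ ∑ i ∈ s, Y i) (hsum₁ : ∑ i ∈ s, Y i ≤ 1)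
    (hs : #s ≤ L) :
    (1 - (1 - 1 / (L : ℝ)) ^ L) * ∑ i ∈ s, Y i ≤ 1 - ∏ i ∈ s, (1 - Y i) := by
  have := (prod_one_sub_le_one_sub_div_pow s Y hY hs).trans
    (one_sub_div_pow_le_one_sub_add_mul_pow L hsum₀ hsum₁)
  linarith

theorem sum_mul_le_sum_mul_of_antitone {R : Type*} [CommRing R] [PartialOrder R] [IsOrderedRing R]
    (k : ℕ) (v a b : ℕ → R) (hv₀ : ∀ j < k, 0 ≤ v j) (hv : ∀ i j, i ≤ j → j < k → v j ≤ v i)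
    (hab : ∀ m ≤ k, ∑ j ∈ range m, a j ≤ ∑ j ∈ range m, b j) :
    ∑ j ∈ range k, v j * a j ≤ ∑ j ∈ range k, v j * b j := by
  induction k generalizing v with
  | zero => simp
  | succ k ih =>
    have hsplit : ∀ f : ℕ → R, ∑ j ∈ range (k + 1), v j * f j
        = ∑ j ∈ range k, (v j - v k) * f j + v k * ∑ j ∈ range (k + 1), f j := by
      intro f
      simp only [sum_range_succ, sub_mul, sum_sub_distrib, ← mul_sum]
      ring
    rw [hsplit a, hsplit b]
    gcongr ?_ + ?_
    · exact ih (fun j => v j - v k) (fun j hj => sub_nonneg.2 (hv j k hj.le k.lt_succ_self))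
        (fun i j hij hj => sub_le_sub_right (hv i j hij (hj.trans k.lt_succ_self)) _)
        (fun m hm => hab m (hm.trans k.le_succ))
    · exact mul_le_mul_of_nonneg_left (hab (k + 1) le_rfl) (hv₀ k k.lt_succ_self)

theorem stmt0_general (L k : ℕ) (hkL : k ≤ L)
    (Y v : ℕ → ℝ)
    (hY : ∀ j < k, 0 ≤ Y j ∧ Y j ≤ 1)
    (hYsum : ∑ j ∈ Finset.range k, Y j ≤ 1)
    (hv0 : ∀ j < k, 0 ≤ v j)
    (hvmono : ∀ i j : ℕ, i ≤ j → j < k → v j ≤ v i) :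
    (1 - (1 - 1 / (L : ℝ)) ^ L) * ∑ j ∈ Finset.range k, v j * Y j ≤
      ∑ j ∈ Finset.range k, v j * Y j * ∏ i ∈ Finset.range j, (1 - Y i) := by
  set c : ℝ := 1 - (1 - 1 / (L : ℝ)) ^ L
  have hprefix : ∀ m ≤ k,
      ∑ j ∈ range m, c * Y j ≤ ∑ j ∈ range m, Y j * ∏ i ∈ range j, (1 - Y i) := by
    intro m hm
    have hY' : ∀ j ∈ range m, 0 ≤ Y j ∧ Y j ≤ 1 := fun j hj => hY j ((mem_range.1 hj).trans_le hm)
    rw [← mul_sum, sum_range_mul_prod_one_sub]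
    exact mul_sum_le_one_sub_prod_one_sub (range m) Y (fun j hj => (hY' j hj).2)
      (sum_nonneg fun j hj => (hY' j hj).1)
      ((sum_le_sum_of_subset_of_nonneg (range_subset_range.2 hm)
        fun j hj _ => (hY j (mem_range.1 hj)).1).trans hYsum)
      (by simpa using hm.trans hkL)
  calc c * ∑ j ∈ range k, v j * Y j = ∑ j ∈ range k, v j * (c * Y j) := by
        rw [mul_sum]; exact sum_congr rfl fun j _ => by ring
    _ ≤ ∑ j ∈ range k, v j * (Y j * ∏ i ∈ range j, (1 - Y i)) :=
        sum_mul_le_sum_mul_of_antitone k v _ _ hv0 hvmono hprefix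
    _ = _ := by simp only [mul_assoc]

/-- Key rounding inequality (Fleischer et al.): for `Y j ∈ [0,1]` with total mass at most 1
and nonincreasing nonnegative values `v`, the "first-success" weighted sum is at least a
`1 - (1 - 1/L)^L` fraction of the fractional value. -/
theorem stmt0 (L k : ℕ) (hL : 1 ≤ L) (hk1 : 1 ≤ k) (hkL : k ≤ L)
    (Y v : ℕ → ℝ)
    (hY : ∀ j < k, 0 ≤ Y j ∧ Y j ≤ 1)
    (hYsum : ∑ j ∈ Finset.range k, Y j ≤ 1)
    (hv0 : ∀ j < k, 0 ≤ v j)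
    (hvmono : ∀ i j : ℕ, i ≤ j → j < k → v j ≤ v i) :
    (1 - (1 - 1 / (L : ℝ)) ^ L) * ∑ j ∈ Finset.range k, v j * Y j ≤
      ∑ j ∈ Finset.range k, v j * Y j * ∏ i ∈ Finset.range j, (1 - Y i) :=
  stmt0_general L k hkL Y v hY hYsum hv0 hvmono
end

section
/- Let k ≥ 1 and let Y_1, …, Y_k be reals with Y_j ∈ [0,1] for all j and Σ_{j=1}^k Y_j ≤ 1. Then 1 − ∏_{j=1}^k (1 − Y_j) ≥ (1 − 1/e) · Σ_{j=1}^k Y_j. -/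
/-!
Bounding each factor by `1 - y ≤ exp (-y)` gives `∏ (1 - Y j) ≤ exp (-S)` with `S = ∑ Y j`.
Since `S ∈ [0, 1]`, convexity of `exp` places `exp (-S)` below the chord from `(0, 1)` to
`(1, 1/e)`, that is `exp (-S) ≤ 1 - (1 - 1/e) S`.
-/

open Finset Real

theorem Finset.prod_one_sub_le_exp_neg_sum {ι : Type*} (s : Finset ι) (f : ι → ℝ)
    (hf : ∀ i ∈ s, f i ≤ 1) :
    ∏ i ∈ s, (1 - f i) ≤ exp (-∑ i ∈ s, f i) := by
  calc ∏ i ∈ s, (1 - f i)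
      ≤ ∏ i ∈ s, exp (-f i) :=
        prod_le_prod (fun i hi => sub_nonneg.2 (hf i hi))
          (fun i _ => by linarith [add_one_le_exp (-f i)])
    _ = exp (-∑ i ∈ s, f i) := by rw [← sum_neg_distrib, exp_sum]

theorem Real.exp_neg_le_one_sub_mul {x : ℝ} (hx₀ : 0 ≤ x) (hx₁ : x ≤ 1) :
    exp (-x) ≤ 1 - (1 - exp (-1)) * x := by
  have hchord := convexOn_exp.2 (Set.mem_univ 0) (Set.mem_univ (-1)) (sub_nonneg.2 hx₁) hx₀
    (sub_add_cancel 1 x)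
  simp only [smul_eq_mul, exp_zero, mul_zero, zero_add, mul_neg_one] at hchord
  linarith

theorem stmt1_general (k : ℕ) (Y : ℕ → ℝ)
    (hY : ∀ j < k, 0 ≤ Y j ∧ Y j ≤ 1)
    (hYsum : ∑ j ∈ Finset.range k, Y j ≤ 1) :
    (1 - 1 / Real.exp 1) * ∑ j ∈ Finset.range k, Y j ≤
      1 - ∏ j ∈ Finset.range k, (1 - Y j) := by
  have hS₀ : 0 ≤ ∑ j ∈ range k, Y j :=
    sum_nonneg fun j hj => (hY j (mem_range.1 hj)).1
  have hprod := prod_one_sub_le_exp_neg_sum (range k) Y fun j hj => (hY j (mem_range.1 hj)).2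
  have hchord := exp_neg_le_one_sub_mul hS₀ hYsum
  rw [one_div, ← exp_neg]
  linarith

/-- Unweighted rounding inequality: for `Y j ∈ [0,1]` with total mass at most 1,
`1 - ∏ (1 - Y j) ≥ (1 - 1/e) · ∑ Y j`. -/
theorem stmt1 (k : ℕ) (hk : 1 ≤ k) (Y : ℕ → ℝ)
    (hY : ∀ j < k, 0 ≤ Y j ∧ Y j ≤ 1)
    (hYsum : ∑ j ∈ Finset.range k, Y j ≤ 1) :
    (1 - 1 / Real.exp 1) * ∑ j ∈ Finset.range k, Y j ≤
      1 - ∏ j ∈ Finset.range k, (1 - Y j) :=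
  stmt1_general k Y hY hYsum
end

section
/- Consider three lines ℓ1, ℓ2, ℓ3 and three passengers p1, p2, p3 with values v(ℓ1,p1) = v(ℓ2,p1) = 1, v(ℓ3,p1) = 0; v(ℓ1,p2) = v(ℓ3,p2) = 1, v(ℓ2,p2) = 0; v(ℓ1,p3) = 1, v(ℓ2,p3) = v(ℓ3,p3) = 0. An assignment is a function x mapping each passenger to a line or to 'unassigned'; x is feasible for a set S of open lines if every assigned passenger is assigned to a line in S, the set of passengers assigned to ℓ1 is either a subset of {p1, p2} or equal to {p3}, and at most one passenger is assigned to each of ℓ2 and ℓ3. For S ⊆ {ℓ1, ℓ2, ℓ3}, let w(S) be the maximum of Σ_p v(x(p), p) over assignments x feasible for S (with unassigned passengers contributing 0). Then w({ℓ1}) = 2, w({ℓ1, ℓ3}) = 2, w({ℓ1, ℓ2}) = 2, and w({ℓ1, ℓ2, ℓ3}) = 3. In particular, taking S₁ = {ℓ1} ⊂ S₂ = {ℓ1, ℓ2}, we have w(S₁ ∪ {ℓ3}) − w(S₁) < w(S₂ ∪ {ℓ3}) − w(S₂), so w is not submodular. -/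
/-- Passenger-line values of Proposition 3.3: lines `0,1,2` correspond to `ℓ1,ℓ2,ℓ3`,
passengers `0,1,2` to `p1,p2,p3`. -/
def lineVal : Fin 3 → Fin 3 → ℝ := fun ℓ p =>
  if ℓ = 0 then 1
  else if ℓ = 1 then (if p = 0 then 1 else 0)
  else (if p = 1 then 1 else 0)

/-- An assignment `x` (passenger ↦ optional line) is feasible for the set `S` of open lines if
every assigned passenger is assigned to an open line, the passengers assigned to line `ℓ1 = 0`
form either a subset of `{p1, p2}` or exactly `{p3}`, and at most one passenger is assigned to
each of lines `ℓ2 = 1` and `ℓ3 = 2`. -/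
def feasibleAssignment (S : Finset (Fin 3)) (x : Fin 3 → Option (Fin 3)) : Prop :=
  (∀ p ℓ, x p = some ℓ → ℓ ∈ S) ∧
  (Finset.univ.filter (fun p => x p = some 0) ⊆ ({0, 1} : Finset (Fin 3)) ∨
    Finset.univ.filter (fun p => x p = some 0) = ({2} : Finset (Fin 3))) ∧
  (Finset.univ.filter (fun p => x p = some 1)).card ≤ 1 ∧
  (Finset.univ.filter (fun p => x p = some 2)).card ≤ 1

/-- Total value of an assignment (unassigned passengers contribute 0). -/
def assignmentVal (x : Fin 3 → Option (Fin 3)) : ℝ :=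
  ∑ p, (x p).elim 0 (fun ℓ => lineVal ℓ p)

/-! Every passenger values every line at `0` or `1`, so the value of an assignment is the number
of passengers it places on a line they value. Any `S ∋ ℓ1` admits `p1, p2 ↦ ℓ1`, of value `2`,
and `S = {ℓ1, ℓ2, ℓ3}` admits `p1 ↦ ℓ2, p2 ↦ ℓ3, p3 ↦ ℓ1`, of value `3`. If only one of `ℓ2, ℓ3`
is open, serving `p3` forces it to ride `ℓ1` alone, and the one open line among `ℓ2, ℓ3` then
serves at most one of `p1, p2`; so the value is at most `2`. Counting in `ℕ` turns this last bound
into a finite check over all sets of lines and all `64` assignments. -/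

open Finset

def ValuesLine (ℓ p : Fin 3) : Prop := ℓ = 0 ∨ (ℓ = 1 ∧ p = 0) ∨ (ℓ = 2 ∧ p = 1)

instance : DecidableRel ValuesLine := fun ℓ p => by unfold ValuesLine; infer_instance

def Served (x : Fin 3 → Option (Fin 3)) (p : Fin 3) : Prop :=
  ∃ ℓ, x p = some ℓ ∧ ValuesLine ℓ p

instance (x : Fin 3 → Option (Fin 3)) : DecidablePred (Served x) := fun p => by
  unfold Served; infer_instance

instance (S : Finset (Fin 3)) : DecidablePred (feasibleAssignment S) := fun x => by
  unfold feasibleAssignment; infer_instance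

lemma lineVal_eq_ite (ℓ p : Fin 3) : lineVal ℓ p = if ValuesLine ℓ p then 1 else 0 := by
  fin_cases ℓ <;> fin_cases p <;> simp [lineVal, ValuesLine]

lemma assignmentVal_eq_card_served (x : Fin 3 → Option (Fin 3)) :
    assignmentVal x = #{p | Served x p} := by
  rw [card_filter, Nat.cast_sum, assignmentVal]
  refine sum_congr rfl fun p _ => ?_
  rcases hp : x p with _ | ℓ <;> simp [Served, hp, lineVal_eq_ite]

lemma card_served_le_two_of_not_subset :
    ∀ S, ¬ {1, 2} ⊆ S → ∀ x, feasibleAssignment S x → #{p | Served x p} ≤ 2 := by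
  decide

lemma isGreatest_feasible_values {S : Finset (Fin 3)} {n : ℕ}
    (hx : ∃ x, feasibleAssignment S x ∧ #{p | Served x p} = n)
    (hle : ∀ x, feasibleAssignment S x → #{p | Served x p} ≤ n) :
    IsGreatest {y | ∃ x, feasibleAssignment S x ∧ y = assignmentVal x} (n : ℝ) := by
  obtain ⟨x, hxS, hxn⟩ := hx
  refine ⟨⟨x, hxS, by rw [assignmentVal_eq_card_served, hxn]⟩, ?_⟩
  rintro _ ⟨x', hx'S, rfl⟩
  rw [assignmentVal_eq_card_served]
  exact_mod_cast hle x' hx'S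

lemma welfare_eq_two_of_not_subset {w : Finset (Fin 3) → ℝ}
    (hw : ∀ S, IsGreatest {y | ∃ x, feasibleAssignment S x ∧ y = assignmentVal x} (w S))
    {S : Finset (Fin 3)} (h0 : 0 ∈ S) (h12 : ¬ {1, 2} ⊆ S) : w S = 2 := by
  have hx : feasibleAssignment S ![some 0, some 0, none] := by
    refine ⟨fun p ℓ hp => ?_, by decide⟩
    fin_cases p <;> simp_all
  exact (hw S).unique <| isGreatest_feasible_values ⟨_, hx, by decide⟩
    (card_served_le_two_of_not_subset S h12)

lemma welfare_univ {w : Finset (Fin 3) → ℝ}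
    (hw : ∀ S, IsGreatest {y | ∃ x, feasibleAssignment S x ∧ y = assignmentVal x} (w S)) :
    w {0, 1, 2} = 3 :=
  (hw _).unique <| isGreatest_feasible_values ⟨![some 1, some 2, some 0], by decide, by decide⟩
    fun _ _ => (card_filter_le _ _).trans_eq (card_fin 3)

/-- Proposition 3.3: the welfare function `w` (optimal assignment value over feasible
assignments to a set of open lines) satisfies `w {ℓ1} = 2`, `w {ℓ1,ℓ3} = 2`, `w {ℓ1,ℓ2} = 2`,
`w {ℓ1,ℓ2,ℓ3} = 3`; hence the marginal gain of `ℓ3` at `{ℓ1}` is strictly smaller than at the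
superset `{ℓ1,ℓ2}`, so `w` is not submodular. -/
theorem stmt8 (w : Finset (Fin 3) → ℝ)
    (hw : ∀ S, IsGreatest {y | ∃ x, feasibleAssignment S x ∧ y = assignmentVal x} (w S)) :
    w {0} = 2 ∧ w {0, 2} = 2 ∧ w {0, 1} = 2 ∧ w {0, 1, 2} = 3 ∧
    w ({0} ∪ {2}) - w {0} < w ({0, 1} ∪ {2}) - w {0, 1} ∧
    ¬ (∀ s t : Finset (Fin 3), s ⊆ t → ∀ ℓ : Fin 3,
        w (insert ℓ t) - w t ≤ w (insert ℓ s) - w s) := by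
  have h0 : w {0} = 2 := welfare_eq_two_of_not_subset hw (by decide) (by decide)
  have h02 : w {0, 2} = 2 := welfare_eq_two_of_not_subset hw (by decide) (by decide)
  have h01 : w {0, 1} = 2 := welfare_eq_two_of_not_subset hw (by decide) (by decide)
  have h012 : w {0, 1, 2} = 3 := welfare_univ hw
  have hgain : w ({0} ∪ {2}) - w {0} < w ({0, 1} ∪ {2}) - w {0, 1} := by
    rw [show ({0} ∪ {2} : Finset (Fin 3)) = {0, 2} by decide,
      show ({0, 1} ∪ {2} : Finset (Fin 3)) = {0, 1, 2} by decide]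
    linarith
  refine ⟨h0, h02, h01, h012, hgain, fun hsub => hgain.not_ge ?_⟩
  have := hsub {0} {0, 1} (by decide) 2
  rwa [insert_eq 2 {0, 1}, insert_eq 2 {0}, union_comm {2}, union_comm {2}] at this
end

section
/- For every ε ∈ (0,1): the maximum of y₁ + y₂ over y = (y₁, y₂) with y₁, y₂ ∈ {0,1} and y₁ + y₂ ≤ 2 − ε equals 1, whereas the maximum of y₁ + y₂ over y = (y₁, y₂) with y₁, y₂ ∈ [0,1] and y₁ + y₂ ≤ 2 − ε equals 2 − ε. Consequently, for every γ > 1/2 there exists ε ∈ (0,1) for which the ratio of the integer optimum to the fractional optimum, namely 1/(2 − ε), is strictly less than γ. -/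
/-!
A 0/1 point with `y₁ + y₂ < 2` has at most one coordinate equal to `1`, while the LP reaches
any budget `B ≤ 2` at `(B/2, B/2)`. The gap `1/(2 - ε)` tends to `1/2` as `ε → 0⁺`.
-/

open Filter Topology Set

theorem isGreatest_binary_sum_le {B : ℝ} (h1B : 1 ≤ B) (hB2 : B < 2) :
    IsGreatest {s | ∃ y₁ y₂ : ℝ, (y₁ = 0 ∨ y₁ = 1) ∧ (y₂ = 0 ∨ y₂ = 1) ∧
      y₁ + y₂ ≤ B ∧ s = y₁ + y₂} 1 := by
  refine ⟨⟨1, 0, Or.inr rfl, Or.inl rfl, by linarith, by ring⟩, ?_⟩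
  rintro s ⟨y₁, y₂, h₁ | h₁, h₂ | h₂, hB, rfl⟩ <;> subst h₁ h₂ <;> linarith

theorem isGreatest_unitInterval_sum_le {B : ℝ} (h0B : 0 ≤ B) (hB2 : B ≤ 2) :
    IsGreatest {s | ∃ y₁ y₂ : ℝ, 0 ≤ y₁ ∧ y₁ ≤ 1 ∧ 0 ≤ y₂ ∧ y₂ ≤ 1 ∧
      y₁ + y₂ ≤ B ∧ s = y₁ + y₂} B :=
  ⟨⟨B / 2, B / 2, by linarith, by linarith, by linarith, by linarith, by linarith, by ring⟩,
    fun _ ⟨_, _, _, _, _, _, hB, hs⟩ => hs ▸ hB⟩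

theorem eventually_one_div_two_sub_lt {γ : ℝ} (hγ : 1 / 2 < γ) :
    ∀ᶠ ε in 𝓝[>] (0 : ℝ), 1 / (2 - ε) < γ := by
  have hcont : ContinuousAt (fun ε : ℝ => 1 / (2 - ε)) 0 :=
    continuousAt_const.div (continuousAt_const.sub continuousAt_id) (by norm_num)
  have hlim : ∀ᶠ ε in 𝓝 (0 : ℝ), 1 / (2 - ε) < γ :=
    hcont.eventually_lt continuousAt_const (by norm_num [hγ])
  exact nhdsWithin_le_nhds hlim

/-- Proposition 3.4 (integrality gap is no better than 1/2): for every `ε ∈ (0,1)`, the integer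
program `max y₁ + y₂` over `y ∈ {0,1}²` with `y₁ + y₂ ≤ 2 - ε` has optimum `1`, while its LP
relaxation over `[0,1]²` has optimum `2 - ε`; consequently the gap `1/(2-ε)` can be made
smaller than any `γ > 1/2`. -/
theorem stmt9 :
    (∀ ε : ℝ, 0 < ε → ε < 1 →
      IsGreatest {s | ∃ y₁ y₂ : ℝ, (y₁ = 0 ∨ y₁ = 1) ∧ (y₂ = 0 ∨ y₂ = 1) ∧
        y₁ + y₂ ≤ 2 - ε ∧ s = y₁ + y₂} 1 ∧
      IsGreatest {s | ∃ y₁ y₂ : ℝ, 0 ≤ y₁ ∧ y₁ ≤ 1 ∧ 0 ≤ y₂ ∧ y₂ ≤ 1 ∧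
        y₁ + y₂ ≤ 2 - ε ∧ s = y₁ + y₂} (2 - ε)) ∧
    (∀ γ : ℝ, 1 / 2 < γ → ∃ ε : ℝ, 0 < ε ∧ ε < 1 ∧ 1 / (2 - ε) < γ) := by
  refine ⟨fun ε hε0 hε1 => ⟨isGreatest_binary_sum_le (by linarith) (by linarith),
    isGreatest_unitInterval_sum_le (by linarith) (by linarith)⟩, fun γ hγ => ?_⟩
  have hε1 : ∀ᶠ ε in 𝓝[>] (0 : ℝ), ε < 1 :=
    nhdsWithin_le_nhds (Iio_mem_nhds one_pos)
  exact (eventually_mem_nhdsWithin.and (hε1.and (eventually_one_div_two_sub_lt hγ))).exists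
end
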